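/- Context-free monoidal languages are closed under union: if L₁ and L₂ are context-free monoidal languages over C with start symbols of the same type ⟨X|Y⟩, then L₁ ∪ L₂ is a context-free monoidal language. -/

import Mathlib

/-! Take the disjoint union of the grammars together with a fresh start sort, and for each old
start sort a production from the fresh sort whose rule is a single hole. Derivations of each
grammar embed into the union, and conversely every derivation of the union below an old sort lies
entirely in one of the grammars, since no production leads from an old sort back to the fresh
one; both translations preserve the diagram context a derivation evaluates to. A closed
derivation from the fresh sort is a start production applied to such a derivation, and filling
the single hole only transports its value along the identification of types. -/

open CategoryTheory

/-- A strict monoidal structure on a category whose objects form a monoid: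
a tensor on morphisms that is functorial and strictly associative and unital. -/
class SMC (C : Type u) [Category.{v} C] [Monoid C] where
  tens : ∀ {W X Y Z : C}, (W ⟶ X) → (Y ⟶ Z) → (W * Y ⟶ X * Z)
  tens_id : ∀ (X Y : C), tens (𝟙 X) (𝟙 Y) = 𝟙 (X * Y)
  tens_comp : ∀ {X₁ X₂ X₃ Y₁ Y₂ Y₃ : C} (f₁ : X₁ ⟶ X₂) (f₂ : X₂ ⟶ X₃)
      (g₁ : Y₁ ⟶ Y₂) (g₂ : Y₂ ⟶ Y₃),
      tens (f₁ ≫ f₂) (g₁ ≫ g₂) = tens f₁ g₁ ≫ tens f₂ g₂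
  tens_assoc : ∀ {X X' Y Y' Z Z' : C} (f : X ⟶ X') (g : Y ⟶ Y') (h : Z ⟶ Z'),
      tens (tens f g) h =
        eqToHom (mul_assoc X Y Z) ≫ tens f (tens g h) ≫ eqToHom (mul_assoc X' Y' Z').symm
  tens_one_left : ∀ {X Y : C} (f : X ⟶ Y),
      tens (𝟙 (1 : C)) f = eqToHom (one_mul X) ≫ f ≫ eqToHom (one_mul Y).symm
  tens_one_right : ∀ {X Y : C} (f : X ⟶ Y),
      tens f (𝟙 (1 : C)) = eqToHom (mul_one X) ≫ f ≫ eqToHom (mul_one Y).symm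

/-- A raw optic over a strict monoidal category `C`, from the list of pairs `l` to the
pair `⟨X|T⟩`: a tuple of morphisms `f₀ : X ⟶ M₁*A₁*N₁`,
`fᵢ : Mᵢ*Bᵢ*Nᵢ ⟶ Mᵢ₊₁*Aᵢ₊₁*Nᵢ₊₁`, `fₙ : Mₙ*Bₙ*Nₙ ⟶ T` for a choice of middle objects
`Mᵢ`, `Nᵢ`.  A nullary raw optic is a single morphism `X ⟶ T`. -/
inductive RawT (C : Type u) [Category.{v} C] [Monoid C] [SMC C] :
    C → List (C × C) → C → Type (max u v)
  | nil {X T : C} (f : X ⟶ T) : RawT C X [] T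
  | cons {X T A B : C} {l : List (C × C)} (M N : C) (f : X ⟶ M * A * N)
      (rest : RawT C (M * B * N) l T) : RawT C X ((A, B) :: l) T

namespace RawT

variable {C : Type u} [Category.{v} C] [Monoid C] [SMC C]

def castL {X T : C} {l l' : List (C × C)} (h : l = l') (r : RawT C X l T) :
    RawT C X l' T := by subst h; exact r

def castSrc {X X' T : C} {l : List (C × C)} (h : X = X') (r : RawT C X l T) :
    RawT C X' l T := by subst h; exact r

/-- Whiskering a raw optic on both sides by objects `M`, `N`. -/
def whisk (M N : C) : ∀ {X T : C} {l : List (C × C)},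
    RawT C X l T → RawT C (M * X * N) l (M * T * N)
  | _, _, _, .nil f => .nil (SMC.tens (SMC.tens (𝟙 M) f) (𝟙 N))
  | _, _, _, .cons (A := A) (B := B) M' N' f rest =>
      .cons (M * M') (N' * N)
        (SMC.tens (SMC.tens (𝟙 M) f) (𝟙 N) ≫ eqToHom (by simp [mul_assoc]))
        ((whisk M N rest).castSrc (by simp [mul_assoc]))

/-- Precompose a raw optic with a morphism. -/
def precomp {W X T : C} {l : List (C × C)} (e : W ⟶ X) :
    RawT C X l T → RawT C W l T
  | .nil f => .nil (e ≫ f)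
  | .cons M N f rest => .cons M N (e ≫ f) rest

/-- Concatenation of raw optics. -/
def append : ∀ {X T U : C} {l l' : List (C × C)},
    RawT C X l T → RawT C T l' U → RawT C X (l ++ l') U
  | _, _, _, _, _, .nil f, s => s.precomp f
  | _, _, _, _, _, .cons M N f rest, s => .cons M N f (rest.append s)

/-- Composition of raw optics: substitution of a raw optic `G` into the hole of `F`
in position `l₁.length`, whiskering the components of `G` by the middle objects. -/
def subst : ∀ (l₁ : List (C × C)) {l₂ : List (C × C)} {X T A B : C} {l' : List (C × C)},
    RawT C X (l₁ ++ (A, B) :: l₂) T → RawT C A l' B → RawT C X (l₁ ++ l' ++ l₂) T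
  | [], _, _, _, _, _, _, F, G =>
      match F with
      | .cons M N f rest => ((whisk M N G).append rest).precomp f
  | _ :: l₁, _, _, _, _, _, _, F, G =>
      match F with
      | .cons M N f rest => .cons M N f (subst l₁ rest G)

/-- The identity raw optic on `⟨A|B⟩`. -/
def idRaw (A B : C) : RawT C A [(A, B)] B :=
  .cons 1 1 (eqToHom (by simp)) (.nil (eqToHom (by simp)))

end RawT

/-- Diagram contexts over a strict monoidal category `C`: formal terms built from
morphisms of `C`, named typed holes, sequential and parallel composition. -/
inductive CTm (C : Type u) [Category.{v} C] [Monoid C] [SMC C] : C → C → Type (max u v)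
  | of {X Y : C} (f : X ⟶ Y) : CTm C X Y
  | hole (n : ℕ) (A B : C) : CTm C A B
  | seq {X Y Z : C} : CTm C X Y → CTm C Y Z → CTm C X Z
  | par {X Y X' Y' : C} : CTm C X Y → CTm C X' Y' → CTm C (X * X') (Y * Y')

namespace CTm

variable {C : Type u} [Category.{v} C] [Monoid C] [SMC C]

def castc {X X' Y Y' : C} (h1 : X = X') (h2 : Y = Y') (t : CTm C X Y) : CTm C X' Y' := by
  subst h1; subst h2; exact t

/-- Renaming of holes. -/
def rename (ρ : ℕ → ℕ) : ∀ {X Y : C}, CTm C X Y → CTm C X Y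
  | _, _, .of f => .of f
  | _, _, .hole n A B => .hole (ρ n) A B
  | _, _, .seq a b => .seq (a.rename ρ) (b.rename ρ)
  | _, _, .par a b => .par (a.rename ρ) (b.rename ρ)

/-- The list of (named, typed) holes occurring in a diagram context, in order. -/
def holesOf : ∀ {X Y : C}, CTm C X Y → List (ℕ × C × C)
  | _, _, .of _ => []
  | _, _, .hole n A B => [(n, A, B)]
  | _, _, .seq a b => a.holesOf ++ b.holesOf
  | _, _, .par a b => a.holesOf ++ b.holesOf

/-- Filling the holes named `n` of type `⟨A|B⟩` with a diagram context `u`. -/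
def fill [DecidableEq C] (n : ℕ) {A B : C} (u : CTm C A B) :
    ∀ {X Y : C}, CTm C X Y → CTm C X Y
  | _, _, .of f => .of f
  | _, _, .hole m A' B' =>
      if h : m = n ∧ A = A' ∧ B = B' then u.castc h.2.1 h.2.2 else .hole m A' B'
  | _, _, .seq a b => .seq (fill n u a) (fill n u b)
  | _, _, .par a b => .par (fill n u a) (fill n u b)

/-- Evaluation of a hole-free diagram context as a morphism of `C`. -/
def evalO : ∀ {X Y : C}, CTm C X Y → Option (X ⟶ Y)
  | _, _, .of f => some f
  | _, _, .hole _ _ _ => none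
  | _, _, .seq a b => do pure ((← a.evalO) ≫ (← b.evalO))
  | _, _, .par a b => do pure (SMC.tens (← a.evalO) (← b.evalO))

end CTm

/-- Equality of diagram contexts over a strict monoidal category: the congruence
generated by the strict monoidal equations together with the identification of formal
composites of morphisms of `C` with actual composites in `C`. -/
inductive CTmEq (C : Type u) [Category.{v} C] [Monoid C] [SMC C] :
    ∀ {X Y : C}, CTm C X Y → CTm C X Y → Prop
  | refl {X Y} (t : CTm C X Y) : CTmEq C t t
  | symm {X Y} {t u : CTm C X Y} : CTmEq C t u → CTmEq C u t
  | trans {X Y} {t u v : CTm C X Y} : CTmEq C t u → CTmEq C u v → CTmEq C t v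
  | seq_congr {X Y Z} {t t' : CTm C X Y} {u u' : CTm C Y Z} :
      CTmEq C t t' → CTmEq C u u' → CTmEq C (t.seq u) (t'.seq u')
  | par_congr {X Y X' Y'} {t t' : CTm C X Y} {u u' : CTm C X' Y'} :
      CTmEq C t t' → CTmEq C u u' → CTmEq C (t.par u) (t'.par u')
  | of_comp {X Y Z} (f : X ⟶ Y) (g : Y ⟶ Z) :
      CTmEq C (.of (f ≫ g)) ((CTm.of f).seq (.of g))
  | of_tens {X Y X' Y'} (f : X ⟶ Y) (g : X' ⟶ Y') :
      CTmEq C (.of (SMC.tens f g)) ((CTm.of f).par (.of g))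
  | seq_assoc {W X Y Z} (t₁ : CTm C W X) (t₂ : CTm C X Y) (t₃ : CTm C Y Z) :
      CTmEq C ((t₁.seq t₂).seq t₃) (t₁.seq (t₂.seq t₃))
  | seq_id_right {X Y} (t : CTm C X Y) : CTmEq C (t.seq (.of (𝟙 Y))) t
  | seq_id_left {X Y} (t : CTm C X Y) : CTmEq C ((CTm.of (𝟙 X)).seq t) t
  | par_assoc {X₁ Y₁ X₂ Y₂ X₃ Y₃} (t₁ : CTm C X₁ Y₁) (t₂ : CTm C X₂ Y₂) (t₃ : CTm C X₃ Y₃) :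
      CTmEq C (((t₁.par t₂).par t₃).castc (mul_assoc X₁ X₂ X₃) (mul_assoc Y₁ Y₂ Y₃))
        (t₁.par (t₂.par t₃))
  | par_one_left {X Y} (t : CTm C X Y) :
      CTmEq C (((CTm.of (𝟙 (1 : C))).par t).castc (one_mul X) (one_mul Y)) t
  | par_one_right {X Y} (t : CTm C X Y) :
      CTmEq C ((t.par (.of (𝟙 (1 : C)))).castc (mul_one X) (mul_one Y)) t
  | interchange {X Y Z X' Y' Z'} (t₁ : CTm C X Y) (t₂ : CTm C Y Z)
      (t₃ : CTm C X' Y') (t₄ : CTm C Y' Z') :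
      CTmEq C ((t₁.seq t₂).par (t₃.seq t₄)) ((t₁.par t₃).seq (t₂.par t₄))
  | cast_eq {X X' Y Y'} (h1 : X = X') (h2 : Y = Y') (t : CTm C X Y) :
      CTmEq C (t.castc h1 h2) ((CTm.of (CategoryTheory.eqToHom h1.symm)).seq
        (t.seq (.of (CategoryTheory.eqToHom h2))))

/-- Gluing a raw optic into a diagram context, numbering its holes `k, k+1, …`
from left to right. -/
def RawT.glue {C : Type u} [Category.{v} C] [Monoid C] [SMC C] :
    ∀ {X T : C} {l : List (C × C)}, ℕ → RawT C X l T → CTm C X T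
  | _, _, _, _, .nil f => .of f
  | _, _, _, k, .cons (A := A) (B := B) M N f rest =>
      (CTm.of f).seq
        ((((CTm.of (𝟙 M)).par (.hole k A B)).par (.of (𝟙 N))).seq (rest.glue (k + 1)))

open CategoryTheory

/-- A context-free monoidal grammar over a strict monoidal category `C`: a finite
multigraph of non-terminals typed by pairs of objects of `C`, each production being
mapped to a diagram context whose holes are exactly the (typed) inputs of the
production. -/
structure CFG (C : Type u) [Category.{v} C] [Monoid C] [SMC C] where
  V : Type
  finV : Finite V
  ty : V → C × C
  Prd : List V → V → Type
  finP : Finite ((l : List V) × (Y : V) × Prd l Y)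
  rule : ∀ {l : List V} {Y : V}, Prd l Y → CTm C (ty Y).1 (ty Y).2
  rule_holes : ∀ {l : List V} {Y : V} (r : Prd l Y),
    (rule r).holesOf.Perm ((List.range l.length).zip (l.map ty))

namespace CFG

variable {C : Type u} [Category.{v} C] [Monoid C] [SMC C]

mutual
/-- Closed derivations of the free multicategory on the multigraph of a grammar. -/
inductive Deriv (𝒢 : CFG C) : 𝒢.V → Type (max u v)
  | node {l : List 𝒢.V} {Y : 𝒢.V} (r : 𝒢.Prd l Y) (ds : DerivList 𝒢 l) : Deriv 𝒢 Y
inductive DerivList (𝒢 : CFG C) : List 𝒢.V → Type (max u v)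
  | nil : DerivList 𝒢 []
  | cons {v : 𝒢.V} {l : List 𝒢.V} : Deriv 𝒢 v → DerivList 𝒢 l → DerivList 𝒢 (v :: l)
end

variable [DecidableEq C]

mutual
/-- The image of a closed derivation under the multifunctor induced by the grammar:
the diagram context obtained by recursively filling the holes of the rules. -/
def evalTm {𝒢 : CFG C} : ∀ {v : 𝒢.V}, Deriv 𝒢 v → CTm C (𝒢.ty v).1 (𝒢.ty v).2
  | _, .node r ds => fillListFrom 0 ds (𝒢.rule r)
def fillListFrom {𝒢 : CFG C} {X Y : C} :
    ∀ {l : List 𝒢.V}, ℕ → DerivList 𝒢 l → CTm C X Y → CTm C X Y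
  | _, _, .nil, t => t
  | _, k, .cons d ds, t => fillListFrom (k + 1) ds (CTm.fill k (evalTm d) t)
end

/-- The language of a context-free monoidal grammar at a start sort. -/
def lang (𝒢 : CFG C) (S : 𝒢.V) : Set ((𝒢.ty S).1 ⟶ (𝒢.ty S).2) :=
  {f | ∃ d : Deriv 𝒢 S, (evalTm d).evalO = some f}

/-- The language, transported along an identification of the type of the start sort. -/
def langAt (𝒢 : CFG C) (S : 𝒢.V) {X Y : C} (h : 𝒢.ty S = (X, Y)) : Set (X ⟶ Y) :=
  {f | ∃ g ∈ 𝒢.lang S,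
    f = eqToHom (congrArg Prod.fst h).symm ≫ g ≫ eqToHom (congrArg Prod.snd h)}

end CFG

theorem CTm.evalO_castc {C : Type u} [Category.{v} C] [Monoid C] [SMC C]
    {A A' B B' : C} (hA : A = A') (hB : B = B') (t : CTm C A B) :
    (t.castc hA hB).evalO = t.evalO.map fun g => eqToHom hA.symm ≫ g ≫ eqToHom hB := by
  subst hA hB
  cases h : t.evalO <;> simp [CTm.castc, h]

theorem CTm.fill_hole_self {C : Type u} [Category.{v} C] [Monoid C] [SMC C] [DecidableEq C]
    (n : ℕ) {A A' B B' : C} (hA : A = A') (hB : B = B') (u : CTm C A B) :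
    CTm.fill n u (.hole n A' B') = u.castc hA hB :=
  dif_pos ⟨rfl, hA, hB⟩

namespace CFG

section IUnion

variable {C : Type u} [Category.{v} C] [Monoid C] [SMC C] {ι : Type}
variable (𝒢 : ι → CFG C) (S : ∀ i, (𝒢 i).V) (X Y : C)

inductive IUnionPrd : List (Option (Σ i, (𝒢 i).V)) → Option (Σ i, (𝒢 i).V) → Type
  | inj {i : ι} {l : List (𝒢 i).V} {w : (𝒢 i).V} (r : (𝒢 i).Prd l w) :
      IUnionPrd (l.map fun v => some ⟨i, v⟩) (some ⟨i, w⟩)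
  | start (i : ι) : IUnionPrd [some ⟨i, S i⟩] none

abbrev iUnionTy : Option (Σ i, (𝒢 i).V) → C × C
  | none => (X, Y)
  | some ⟨i, w⟩ => (𝒢 i).ty w

def iUnionRule : ∀ {l v}, IUnionPrd 𝒢 S l v → CTm C (iUnionTy 𝒢 X Y v).1 (iUnionTy 𝒢 X Y v).2
  | _, _, .inj r => (𝒢 _).rule r
  | _, _, .start _ => .hole 0 X Y

-- Reducible, so that instances such as `SizeOf` on its derivations see the sorts `Option _`.
abbrev iUnion [Finite ι] (h : ∀ i, (𝒢 i).ty (S i) = (X, Y)) : CFG C where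
  V := Option (Σ i, (𝒢 i).V)
  finV := by
    have := fun i => (𝒢 i).finV
    infer_instance
  ty := iUnionTy 𝒢 X Y
  Prd := IUnionPrd 𝒢 S
  finP := by
    have := fun i => (𝒢 i).finP
    let code : (Σ l, Σ v, IUnionPrd 𝒢 S l v) → (Σ i, Σ l, Σ w, (𝒢 i).Prd l w) ⊕ ι
      | ⟨_, _, .inj r⟩ => .inl ⟨_, _, _, r⟩
      | ⟨_, _, .start i⟩ => .inr i
    refine Finite.of_injective code ?_
    rintro ⟨_, _, r | i⟩ ⟨_, _, r' | i'⟩ hcode <;> cases hcode <;> rfl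
  rule := iUnionRule 𝒢 S X Y
  rule_holes := by
    rintro _ _ (r | i)
    · simpa only [iUnionRule, iUnionTy, List.length_map, List.map_map, Function.comp_def]
        using (𝒢 _).rule_holes r
    · simp [iUnionRule, CTm.holesOf, iUnionTy, h i]

variable {𝒢 S X Y} [Finite ι] (h : ∀ i, (𝒢 i).ty (S i) = (X, Y)) {i : ι}

mutual
def Deriv.toIUnion : ∀ {w : (𝒢 i).V}, Deriv (𝒢 i) w → Deriv (iUnion 𝒢 S X Y h) (some ⟨i, w⟩)
  | _, .node r ds => .node (.inj r) ds.toIUnion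
def DerivList.toIUnion : ∀ {l : List (𝒢 i).V}, DerivList (𝒢 i) l →
    DerivList (iUnion 𝒢 S X Y h) (l.map fun v => some ⟨i, v⟩)
  | _, .nil => .nil
  | _, .cons d ds => .cons d.toIUnion ds.toIUnion
end

mutual
def Deriv.ofIUnion : ∀ {w : (𝒢 i).V}, Deriv (iUnion 𝒢 S X Y h) (some ⟨i, w⟩) → Deriv (𝒢 i) w
  | _, .node (.inj r) ds => .node r ds.ofIUnion
  termination_by _ d => sizeOf d
def DerivList.ofIUnion : ∀ {l : List (𝒢 i).V},
    DerivList (iUnion 𝒢 S X Y h) (l.map fun v => some ⟨i, v⟩) → DerivList (𝒢 i) l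
  | [], _ => .nil
  | _ :: _, .cons d ds => .cons d.ofIUnion ds.ofIUnion
  termination_by _ ds => sizeOf ds
  decreasing_by all_goals (rw [DerivList.cons.sizeOf_spec]; omega)
end

theorem Deriv.exists_eq_node_start : ∀ d : Deriv (iUnion 𝒢 S X Y h) none,
    ∃ (j : ι) (d' : Deriv (iUnion 𝒢 S X Y h) (some ⟨j, S j⟩)),
      d = .node (.start j) (.cons d' .nil)
  | .node p ds => by
    cases p with
    | start j =>
      rcases ds with _ | ⟨d', _ | _⟩
      exact ⟨j, d', rfl⟩

variable [DecidableEq C]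

mutual
theorem evalTm_toIUnion : ∀ {w : (𝒢 i).V} (d : Deriv (𝒢 i) w),
    evalTm (d.toIUnion h) = evalTm d
  | _, .node _ ds => fillListFrom_toIUnion ds 0 _
theorem fillListFrom_toIUnion : ∀ {l : List (𝒢 i).V} (ds : DerivList (𝒢 i) l) {A B : C}
    (k : ℕ) (t : CTm C A B), fillListFrom k (ds.toIUnion h) t = fillListFrom k ds t
  | _, .nil, _, _, _, _ => rfl
  | _, .cons d ds, _, _, k, t => by
    simp only [DerivList.toIUnion, fillListFrom, evalTm_toIUnion d]
    exact fillListFrom_toIUnion ds (k + 1) _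
end

mutual
theorem evalTm_ofIUnion : ∀ {w : (𝒢 i).V} (d : Deriv (iUnion 𝒢 S X Y h) (some ⟨i, w⟩)),
    evalTm d.ofIUnion = evalTm d
  | _, .node (.inj _) ds => by
    rw [Deriv.ofIUnion]
    exact fillListFrom_ofIUnion ds 0 _
  termination_by _ d => sizeOf d
theorem fillListFrom_ofIUnion : ∀ {l : List (𝒢 i).V}
    (ds : DerivList (iUnion 𝒢 S X Y h) (l.map fun v => some ⟨i, v⟩)) {A B : C} (k : ℕ)
    (t : CTm C A B), fillListFrom k ds.ofIUnion t = fillListFrom k ds t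
  | [], .nil, _, _, _, _ => by rw [DerivList.ofIUnion]; rfl
  | _ :: _, .cons d ds, _, _, k, t => by
    simp only [DerivList.ofIUnion, fillListFrom, evalTm_ofIUnion d]
    exact fillListFrom_ofIUnion ds (k + 1) _
  termination_by _ ds => sizeOf ds
  decreasing_by all_goals (rw [DerivList.cons.sizeOf_spec]; omega)
end

theorem evalTm_start (d : Deriv (iUnion 𝒢 S X Y h) (some ⟨i, S i⟩)) :
    evalTm (𝒢 := iUnion 𝒢 S X Y h) (.node (.start i) (.cons d .nil)) =
      (evalTm d).castc (congrArg Prod.fst (h i)) (congrArg Prod.snd (h i)) :=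
  CTm.fill_hole_self 0 _ _ _

theorem langAt_iUnion :
    (iUnion 𝒢 S X Y h).langAt none rfl = ⋃ j, (𝒢 j).langAt (S j) (h j) := by
  ext f
  simp only [langAt, lang, Set.mem_iUnion, Set.mem_ofPred_eq]
  constructor
  · rintro ⟨g, ⟨d, hd⟩, rfl⟩
    obtain ⟨j, d, rfl⟩ := d.exists_eq_node_start
    rw [evalTm_start, CTm.evalO_castc, Option.map_eq_some_iff] at hd
    obtain ⟨g, hg, rfl⟩ := hd
    exact ⟨j, g, ⟨d.ofIUnion, by rw [evalTm_ofIUnion, hg]⟩, by simp⟩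
  · rintro ⟨j, g, ⟨d, hd⟩, rfl⟩
    refine ⟨eqToHom (congrArg Prod.fst (h j)).symm ≫ g ≫ eqToHom (congrArg Prod.snd (h j)),
      ⟨.node (.start j) (.cons (d.toIUnion h) .nil), ?_⟩, by simp⟩
    rw [evalTm_start, CTm.evalO_castc, evalTm_toIUnion, hd, Option.map_some]

end IUnion

end CFG

/-- Context-free monoidal languages with start symbols of the same type `⟨X|Y⟩`
are closed under union. -/
theorem cf_union_closed (C : Type u) [Category.{v} C] [Monoid C] [SMC C] [DecidableEq C]
    (X Y : C) (𝒢₁ 𝒢₂ : CFG C) (S₁ : 𝒢₁.V) (S₂ : 𝒢₂.V)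
    (h₁ : 𝒢₁.ty S₁ = (X, Y)) (h₂ : 𝒢₂.ty S₂ = (X, Y)) :
    ∃ (𝒢 : CFG C) (S : 𝒢.V) (h : 𝒢.ty S = (X, Y)),
      𝒢.langAt S h = 𝒢₁.langAt S₁ h₁ ∪ 𝒢₂.langAt S₂ h₂ := by
  refine ⟨CFG.iUnion (fun | true => 𝒢₁ | false => 𝒢₂) (fun | true => S₁ | false => S₂) X Y
    (fun | true => h₁ | false => h₂), none, rfl, ?_⟩
  rw [CFG.langAt_iUnion, Set.union_eq_iUnion]
  congr 1
  ext b
  cases b <;> rfl
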